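/- arXiv:1109.0960 — 4 statements merged into one kernel-verified Lean document; each statement's English description precedes it below -/
import Mathlib

section
/- If rational numbers k₁, k₂, k₇ satisfy k₇ = k₁⁸k₂⁸ = k₁¹⁸k₂ = k₂¹³, then either k₂ = 0, or (k₁ = 1 ∧ k₂ = 1), or (k₁ = -1 ∧ k₂ = 1). -/
/-!
Cancelling powers of `k₂ ≠ 0` turns the equations into `k₁ ^ 8 = k₂ ^ 5` and `k₁ ^ 18 = k₂ ^ 12`.
Comparing the two expressions for `k₁ ^ 72` gives `k₂ ^ 45 = k₂ ^ 48`, so `k₂ ^ 3 = 1`; over an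
ordered field this forces `k₂ = 1`, and then `k₁ ^ 8 = 1` forces `k₁ = ±1`.
-/

theorem pow_mul_eq_pow_mul_of_pow_eq_pow {M : Type*} [CommMonoid M] {a b : M} {m n p q s t : ℕ}
    (hm : a ^ m = b ^ p) (hn : a ^ n = b ^ q) (hst : m * s = n * t) :
    b ^ (p * s) = b ^ (q * t) := by
  rw [pow_mul, ← hm, ← pow_mul, hst, pow_mul, hn, ← pow_mul]

/-- The coefficient equations arising from an endomorphism of the inflexible Sullivan
algebras force `k₂ = 0` or `k₁ = ±1, k₂ = 1`. -/
theorem inflexible_coefficient_equations (k₁ k₂ k₇ : ℚ)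
    (h₁ : k₇ = k₁ ^ 8 * k₂ ^ 8) (h₂ : k₇ = k₁ ^ 18 * k₂) (h₃ : k₇ = k₂ ^ 13) :
    k₂ = 0 ∨ (k₁ = 1 ∧ k₂ = 1) ∨ (k₁ = -1 ∧ k₂ = 1) := by
  rcases eq_or_ne k₂ 0 with hk₂ | hk₂
  · exact Or.inl hk₂
  right
  have e₈ : k₁ ^ 8 = k₂ ^ 5 :=
    mul_right_cancel₀ (pow_ne_zero 8 hk₂) (by rw [← h₁, h₃]; ring)
  have e₁₈ : k₁ ^ 18 = k₂ ^ 12 :=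
    mul_right_cancel₀ hk₂ (by rw [← h₂, h₃]; ring)
  have e₇₂ : k₂ ^ 45 = k₂ ^ 48 := pow_mul_eq_pow_mul_of_pow_eq_pow (s := 9) (t := 4) e₈ e₁₈ rfl
  have hcube : k₂ ^ 3 = 1 :=
    (mul_left_cancel₀ (pow_ne_zero 45 hk₂) (by rw [mul_one, ← pow_add]; exact e₇₂)).symm
  have hk₂_one : k₂ = 1 := by
    rcases (pow_eq_one_iff_of_ne_zero three_ne_zero).1 hcube with h | ⟨-, h_even⟩
    · exact h
    · exact absurd h_even (by decide)
  have hk₁ : k₁ = 1 ∨ k₁ = -1 := by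
    have h_pow : k₁ ^ 8 = 1 := by rw [e₈, hk₂_one, one_pow]
    rwa [pow_eq_one_iff_of_ne_zero (by norm_num), and_iff_left (by decide)] at h_pow
  rcases hk₁ with h | h
  · exact Or.inl ⟨h, hk₂_one⟩
  · exact Or.inr ⟨h, hk₂_one⟩
end

section
/- In the free graded-commutative ℚ-algebra on generators x₁ (degree 4), x₂ (degree 6), y₁ (degree 27), y₂ (degree 29), y₃ (degree 31), z (degree 77), z' (degree 75+4i), the derivation d determined by dx₁ = dx₂ = 0, dy₁ = x₁⁴x₂², dy₂ = x₁³x₂³, dy₃ = x₁²x₂⁴, dz = x₁x₂³y₁y₂ - x₁²x₂²y₁y₃ + x₁³x₂y₂y₃ + x₂x₁¹⁸ + x₂¹³, dz' = x₁^(19+i) satisfies d² = 0. -/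
/-! Since `d` raises degree by one, the two cross terms `± d a * d b` in `d (d (a * b))` cancel,
so `d ∘ d` is an ordinary (ungraded) derivation and its kernel is a subalgebra; it therefore
suffices to check `d² = 0` on the generators. There it is immediate except for `z`, since `x₁, x₂`
are cycles and `dyᵢ`, `dz'` are monomials in them. Being of even degree, `x₁` and `x₂` commute
with every homogeneous element, so the three quadratic terms of `dz` have differentials
`x₁⁵x₂⁵y₂ - x₁⁴x₂⁶y₁`, `x₁⁶x₂⁴y₃ - x₁⁴x₂⁶y₁` and `x₁⁶x₂⁴y₃ - x₁⁵x₂⁵y₂`, which cancel in the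
signed sum. -/

theorem Commute.pow_mul_pow_mul_pow_mul_pow {M : Type*} [Monoid M] {x y : M} (h : Commute x y)
    (a b c e : ℕ) : x ^ a * y ^ b * (x ^ c * y ^ e) = x ^ (a + c) * y ^ (b + e) := by
  rw [(h.pow_pow c b).symm.mul_mul_mul_comm, ← pow_add, ← pow_add]

section GradedDerivation

variable {R A : Type*} [CommRing R] [Ring A] [Algebra R A] {𝒜 : ℕ → Submodule R A}
  {d : A →ₗ[R] A}

variable (𝒜) in
def GradedCommutative : Prop :=
  ∀ (p q : ℕ) (a b : A), a ∈ 𝒜 p → b ∈ 𝒜 q → a * b = ((-1 : R) ^ (p * q)) • (b * a)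

variable (𝒜 d) in
def GradedLeibniz : Prop :=
  ∀ p, ∀ a ∈ 𝒜 p, ∀ b, d (a * b) = d a * b + ((-1 : R) ^ p) • (a * d b)

theorem GradedLeibniz.map_one [SetLike.GradedOne 𝒜] (hL : GradedLeibniz 𝒜 d) : d 1 = 0 := by
  simpa only [one_mul, mul_one, pow_zero, one_smul, left_eq_add] using
    hL 0 1 SetLike.GradedOne.one_mem 1

theorem GradedLeibniz.map_mul_eq_zero (hL : GradedLeibniz 𝒜 d) {p : ℕ} {a b : A}
    (ha : a ∈ 𝒜 p) (hda : d a = 0) (hdb : d b = 0) : d (a * b) = 0 := by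
  rw [hL p a ha b, hda, hdb, zero_mul, mul_zero, smul_zero, add_zero]

theorem GradedLeibniz.map_pow_eq_zero [SetLike.GradedMonoid 𝒜] (hL : GradedLeibniz 𝒜 d)
    {p : ℕ} {a : A} (ha : a ∈ 𝒜 p) (hda : d a = 0) (n : ℕ) : d (a ^ n) = 0 := by
  induction n with
  | zero => rw [pow_zero, hL.map_one]
  | succ n ih => rw [pow_succ]; exact hL.map_mul_eq_zero (SetLike.pow_mem_graded n ha) ih hda

theorem GradedLeibniz.map_pow_mul_pow_eq_zero [SetLike.GradedMonoid 𝒜] (hL : GradedLeibniz 𝒜 d)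
    {p₁ p₂ : ℕ} {x₁ x₂ : A} (hx₁ : x₁ ∈ 𝒜 p₁) (hx₂ : x₂ ∈ 𝒜 p₂) (hdx₁ : d x₁ = 0)
    (hdx₂ : d x₂ = 0) (m n : ℕ) : d (x₁ ^ m * x₂ ^ n) = 0 :=
  hL.map_mul_eq_zero (SetLike.pow_mem_graded m hx₁) (hL.map_pow_eq_zero hx₁ hdx₁ m)
    (hL.map_pow_eq_zero hx₂ hdx₂ n)

theorem GradedLeibniz.map_mul_mul_of_odd [SetLike.GradedMonoid 𝒜] (hL : GradedLeibniz 𝒜 d)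
    {p q : ℕ} {c u : A} (hc : c ∈ 𝒜 q) (hq : Even q) (hdc : d c = 0) (hu : u ∈ 𝒜 p)
    (hp : Odd p) (v : A) : d (c * u * v) = c * d u * v - c * u * d v := by
  rw [hL (q + p) _ (SetLike.mul_mem_graded hc hu), hL q c hc, hdc, zero_mul, zero_add,
    hq.neg_one_pow, (hq.add_odd hp).neg_one_pow, one_smul, neg_one_smul, sub_eq_add_neg]

theorem GradedLeibniz.map_map_mul_of_mem (hL : GradedLeibniz 𝒜 d)
    (hdeg : ∀ p, ∀ a ∈ 𝒜 p, d a ∈ 𝒜 (p + 1)) {p : ℕ} {a : A} (ha : a ∈ 𝒜 p) (b : A) :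
    d (d (a * b)) = d (d a) * b + a * d (d b) := by
  rw [hL p a ha b, map_add, map_smul, hL (p + 1) (d a) (hdeg p a ha) b, hL p a ha (d b),
    smul_add, smul_smul, ← pow_add, Even.neg_one_pow ⟨p, rfl⟩, one_smul, pow_succ, mul_neg_one,
    neg_smul]
  abel

theorem GradedLeibniz.map_map_mul [GradedAlgebra 𝒜] (hL : GradedLeibniz 𝒜 d)
    (hdeg : ∀ p, ∀ a ∈ 𝒜 p, d a ∈ 𝒜 (p + 1)) (a b : A) :
    d (d (a * b)) = d (d a) * b + a * d (d b) := by
  induction a using DirectSum.Decomposition.inductionOn 𝒜 with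
  | zero => simp
  | homogeneous a => exact hL.map_map_mul_of_mem hdeg a.2 b
  | add a a' h h' =>
    rw [add_mul, map_add, map_add, h, h', map_add, map_add, add_mul, add_mul]
    abel

theorem GradedLeibniz.map_map_eq_zero_of_adjoin_eq_top [GradedAlgebra 𝒜]
    (hL : GradedLeibniz 𝒜 d) (hdeg : ∀ p, ∀ a ∈ 𝒜 p, d a ∈ 𝒜 (p + 1)) {s : Set A}
    (hs : Algebra.adjoin R s = ⊤) (hds : ∀ a ∈ s, d (d a) = 0) (a : A) : d (d a) = 0 := by
  let ker : Subalgebra R A :=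
    { carrier := {x | d (d x) = 0}
      mul_mem' := fun {x y} (hx : d (d x) = 0) (hy : d (d y) = 0) => by
        rw [Set.mem_ofPred_eq, hL.map_map_mul hdeg, hx, hy, zero_mul, mul_zero, add_zero]
      add_mem' := fun {x y} (hx : d (d x) = 0) (hy : d (d y) = 0) => by
        rw [Set.mem_ofPred_eq, map_add, map_add, hx, hy, add_zero]
      algebraMap_mem' := fun r => by
        rw [Set.mem_ofPred_eq, Algebra.algebraMap_eq_smul_one, map_smul, map_smul, hL.map_one,
          map_zero, smul_zero] }
  exact (Algebra.adjoin_le hds : Algebra.adjoin R s ≤ ker) (hs ▸ Algebra.mem_top)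

theorem GradedCommutative.commute_of_mem_of_even (hcomm : GradedCommutative 𝒜) {p q : ℕ}
    {a b : A} (ha : a ∈ 𝒜 p) (hp : Even p) (hb : b ∈ 𝒜 q) : Commute a b := by
  rw [Commute, SemiconjBy, hcomm p q a b ha hb, (hp.mul_right q).neg_one_pow, one_smul]

theorem pow_mul_pow_mem [SetLike.GradedMonoid 𝒜] {x₁ x₂ : A} {p₁ p₂ : ℕ} (hx₁ : x₁ ∈ 𝒜 p₁)
    (hx₂ : x₂ ∈ 𝒜 p₂) (m n : ℕ) :
    x₁ ^ m * x₂ ^ n ∈ 𝒜 (m * p₁ + n * p₂) :=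
  SetLike.mul_mem_graded (SetLike.pow_mem_graded m hx₁) (SetLike.pow_mem_graded n hx₂)

theorem GradedLeibniz.map_monomial_mul_mul [SetLike.GradedMonoid 𝒜] (hL : GradedLeibniz 𝒜 d)
    (hcomm : GradedCommutative 𝒜) {x₁ x₂ : A} {p₁ p₂ : ℕ} (hx₁ : x₁ ∈ 𝒜 p₁) (hp₁ : Even p₁)
    (hx₂ : x₂ ∈ 𝒜 p₂) (hp₂ : Even p₂)
    (hdx₁ : d x₁ = 0) (hdx₂ : d x₂ = 0) (m n : ℕ) {p a b c e : ℕ} {u v : A} (hu : u ∈ 𝒜 p)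
    (hp : Odd p) (hdu : d u = x₁ ^ a * x₂ ^ b) (hdv : d v = x₁ ^ c * x₂ ^ e) :
    d (x₁ ^ m * x₂ ^ n * u * v) =
      x₁ ^ (m + a) * x₂ ^ (n + b) * v - x₁ ^ (m + c) * x₂ ^ (n + e) * u := by
  have hmono := pow_mul_pow_mem hx₁ hx₂
  have heven (m n : ℕ) : Even (m * p₁ + n * p₂) := (hp₁.mul_left m).add (hp₂.mul_left n)
  have hx₁₂ : Commute x₁ x₂ := hcomm.commute_of_mem_of_even hx₁ hp₁ hx₂
  rw [hL.map_mul_mul_of_odd (hmono m n) (heven m n)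
      (hL.map_pow_mul_pow_eq_zero hx₁ hx₂ hdx₁ hdx₂ m n) hu hp, hdu, hdv,
    hx₁₂.pow_mul_pow_mul_pow_mul_pow, mul_assoc _ u,
    (hcomm.commute_of_mem_of_even (hmono c e) (heven c e) hu).symm.eq, ← mul_assoc,
    hx₁₂.pow_mul_pow_mul_pow_mul_pow]

end GradedDerivation

theorem d_squared_eq_zero_general (i : ℕ) (A : Type) [Ring A] [Algebra ℚ A]
    (𝒜 : ℕ → Submodule ℚ A) [GradedAlgebra 𝒜]
    (x₁ x₂ y₁ y₂ y₃ z z' : A)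
    (hx₁ : x₁ ∈ 𝒜 4) (hx₂ : x₂ ∈ 𝒜 6)
    (hy₁ : y₁ ∈ 𝒜 27) (hy₂ : y₂ ∈ 𝒜 29)
    -- graded commutativity of the algebra
    (hcomm : ∀ (p q : ℕ) (a b : A), a ∈ 𝒜 p → b ∈ 𝒜 q →
      a * b = ((-1 : ℚ) ^ (p * q)) • (b * a))
    -- the algebra is generated by the listed generators
    (hgen : Algebra.adjoin ℚ ({x₁, x₂, y₁, y₂, y₃, z, z'} : Set A) = ⊤)
    (d : A →ₗ[ℚ] A)
    (hdeg : ∀ (p : ℕ), ∀ a ∈ 𝒜 p, d a ∈ 𝒜 (p + 1))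
    -- graded Leibniz rule
    (hLeibniz : ∀ (p : ℕ), ∀ a ∈ 𝒜 p, ∀ b : A,
      d (a * b) = d a * b + ((-1 : ℚ) ^ p) • (a * d b))
    (hdx₁ : d x₁ = 0) (hdx₂ : d x₂ = 0)
    (hdy₁ : d y₁ = x₁ ^ 4 * x₂ ^ 2)
    (hdy₂ : d y₂ = x₁ ^ 3 * x₂ ^ 3)
    (hdy₃ : d y₃ = x₁ ^ 2 * x₂ ^ 4)
    (hdz : d z = x₁ * x₂ ^ 3 * y₁ * y₂ - x₁ ^ 2 * x₂ ^ 2 * y₁ * y₃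
      + x₁ ^ 3 * x₂ * y₂ * y₃ + x₂ * x₁ ^ 18 + x₂ ^ 13)
    (hdz' : d z' = x₁ ^ (19 + i)) :
    ∀ a : A, d (d a) = 0 := by
  have hL : GradedLeibniz 𝒜 d := hLeibniz
  have hdmono := hL.map_pow_mul_pow_eq_zero hx₁ hx₂ hdx₁ hdx₂
  have key := hL.map_monomial_mul_mul hcomm hx₁ (by decide) hx₂ (by decide) hdx₁ hdx₂
  have hddz : d (d z) = 0 := by
    have e₁ := key 1 3 hy₁ (by decide) hdy₁ hdy₂
    have e₂ := key 2 2 hy₁ (by decide) hdy₁ hdy₃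
    have e₃ := key 3 1 hy₂ (by decide) hdy₂ hdy₃
    simp only [pow_one, Nat.reduceAdd] at e₁ e₂ e₃
    rw [hdz, map_add, map_add, map_add, map_sub, e₁, e₂, e₃,
      hL.map_mul_eq_zero hx₂ hdx₂ (hL.map_pow_eq_zero hx₁ hdx₁ 18), hL.map_pow_eq_zero hx₂ hdx₂]
    abel
  refine hL.map_map_eq_zero_of_adjoin_eq_top hdeg hgen ?_
  simp only [Set.mem_insert_iff, Set.mem_singleton_iff, forall_eq_or_imp, forall_eq]
  exact ⟨by rw [hdx₁, map_zero], by rw [hdx₂, map_zero], by rw [hdy₁, hdmono],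
    by rw [hdy₂, hdmono], by rw [hdy₃, hdmono], hddz, by rw [hdz', hL.map_pow_eq_zero hx₁ hdx₁]⟩

/-- In the free graded-commutative ℚ-algebra on `x₁` (deg 4), `x₂` (deg 6), `y₁` (deg 27),
`y₂` (deg 29), `y₃` (deg 31), `z` (deg 77), `z'` (deg 75 + 4i), the degree `+1` derivation
`d` (extending its values on generators by the graded Leibniz rule) determined by
`dx₁ = dx₂ = 0`, `dy₁ = x₁⁴x₂²`, `dy₂ = x₁³x₂³`, `dy₃ = x₁²x₂⁴`,
`dz = x₁x₂³y₁y₂ - x₁²x₂²y₁y₃ + x₁³x₂y₂y₃ + x₂x₁¹⁸ + x₂¹³`, `dz' = x₁^(19+i)`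
satisfies `d² = 0`. -/
theorem d_squared_eq_zero (i : ℕ) (A : Type) [Ring A] [Algebra ℚ A]
    (𝒜 : ℕ → Submodule ℚ A) [GradedAlgebra 𝒜]
    (x₁ x₂ y₁ y₂ y₃ z z' : A)
    (hx₁ : x₁ ∈ 𝒜 4) (hx₂ : x₂ ∈ 𝒜 6)
    (hy₁ : y₁ ∈ 𝒜 27) (hy₂ : y₂ ∈ 𝒜 29) (hy₃ : y₃ ∈ 𝒜 31)
    (hz : z ∈ 𝒜 77) (hz' : z' ∈ 𝒜 (75 + 4 * i))
    -- graded commutativity of the algebra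
    (hcomm : ∀ (p q : ℕ) (a b : A), a ∈ 𝒜 p → b ∈ 𝒜 q →
      a * b = ((-1 : ℚ) ^ (p * q)) • (b * a))
    -- the algebra is generated by the listed generators
    (hgen : Algebra.adjoin ℚ ({x₁, x₂, y₁, y₂, y₃, z, z'} : Set A) = ⊤)
    (d : A →ₗ[ℚ] A)
    (hdeg : ∀ (p : ℕ), ∀ a ∈ 𝒜 p, d a ∈ 𝒜 (p + 1))
    -- graded Leibniz rule
    (hLeibniz : ∀ (p : ℕ), ∀ a ∈ 𝒜 p, ∀ b : A,
      d (a * b) = d a * b + ((-1 : ℚ) ^ p) • (a * d b))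
    (hdx₁ : d x₁ = 0) (hdx₂ : d x₂ = 0)
    (hdy₁ : d y₁ = x₁ ^ 4 * x₂ ^ 2)
    (hdy₂ : d y₂ = x₁ ^ 3 * x₂ ^ 3)
    (hdy₃ : d y₃ = x₁ ^ 2 * x₂ ^ 4)
    (hdz : d z = x₁ * x₂ ^ 3 * y₁ * y₂ - x₁ ^ 2 * x₂ ^ 2 * y₁ * y₃
      + x₁ ^ 3 * x₂ * y₂ * y₃ + x₂ * x₁ ^ 18 + x₂ ^ 13)
    (hdz' : d z' = x₁ ^ (19 + i)) :
    ∀ a : A, d (d a) = 0 :=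
  d_squared_eq_zero_general i A 𝒜 x₁ x₂ y₁ y₂ y₃ z z' hx₁ hx₂ hy₁ hy₂ hcomm hgen d hdeg hLeibniz
    hdx₁ hdx₂ hdy₁ hdy₂ hdy₃ hdz hdz'
end

section
/- In the Sullivan algebra (A_i, d) defined by dx₁ = dx₂ = 0, dy₁ = x₁⁴x₂², dy₂ = x₁³x₂³, dy₃ = x₁²x₂⁴, dz = x₁x₂³y₁y₂ - x₁²x₂²y₁y₃ + x₁³x₂y₂y₃ + x₂x₁¹⁸ + x₂¹³, dz' = x₁^(19+i), the element x₂²⁶ is exact, and hence [x₂]²⁶ = 0 in cohomology. -/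
/-- In the Sullivan algebra `(A_i, d)` of the inflexible examples, the element `x₂²⁶`
is exact, i.e. `[x₂]²⁶ = 0` in cohomology. -/
theorem x2_pow_26_is_exact (i : ℕ) (A : Type) [Ring A] [Algebra ℚ A]
    (𝒜 : ℕ → Submodule ℚ A) [GradedAlgebra 𝒜]
    (x₁ x₂ y₁ y₂ y₃ z z' : A)
    (hx₁ : x₁ ∈ 𝒜 4) (hx₂ : x₂ ∈ 𝒜 6)
    (hy₁ : y₁ ∈ 𝒜 27) (hy₂ : y₂ ∈ 𝒜 29) (hy₃ : y₃ ∈ 𝒜 31)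
    (hz : z ∈ 𝒜 77) (hz' : z' ∈ 𝒜 (75 + 4 * i))
    (hcomm : ∀ (p q : ℕ) (a b : A), a ∈ 𝒜 p → b ∈ 𝒜 q →
      a * b = ((-1 : ℚ) ^ (p * q)) • (b * a))
    (hgen : Algebra.adjoin ℚ ({x₁, x₂, y₁, y₂, y₃, z, z'} : Set A) = ⊤)
    (d : A →ₗ[ℚ] A)
    (hdeg : ∀ (p : ℕ), ∀ a ∈ 𝒜 p, d a ∈ 𝒜 (p + 1))
    (hLeibniz : ∀ (p : ℕ), ∀ a ∈ 𝒜 p, ∀ b : A,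
      d (a * b) = d a * b + ((-1 : ℚ) ^ p) • (a * d b))
    (hdx₁ : d x₁ = 0) (hdx₂ : d x₂ = 0)
    (hdy₁ : d y₁ = x₁ ^ 4 * x₂ ^ 2)
    (hdy₂ : d y₂ = x₁ ^ 3 * x₂ ^ 3)
    (hdy₃ : d y₃ = x₁ ^ 2 * x₂ ^ 4)
    (hdz : d z = x₁ * x₂ ^ 3 * y₁ * y₂ - x₁ ^ 2 * x₂ ^ 2 * y₁ * y₃
      + x₁ ^ 3 * x₂ * y₂ * y₃ + x₂ * x₁ ^ 18 + x₂ ^ 13)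
    (hdz' : d z' = x₁ ^ (19 + i)) :
    ∃ a : A, d a = x₂ ^ 26 := by
  classical
  -- a = -a implies a = 0 (ℚ-module)
  have half : ∀ a : A, a = -a → a = 0 := by
    intro a h
    have h2 : (2 : ℚ) • a = 0 := by
      rw [two_smul]
      nth_rewrite 1 [h]
      exact neg_add_cancel a
    rcases smul_eq_zero.mp h2 with h' | h'
    · exact absurd h' (by norm_num)
    · exact h'
  -- graded commutation
  have ecomm : ∀ (p q : ℕ) (a b : A), a ∈ 𝒜 p → b ∈ 𝒜 q → Even (p*q) → a*b = b*a := by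
    intro p q a b ha hb hev
    rw [hcomm p q a b ha hb, hev.neg_one_pow, one_smul]
  have ocomm : ∀ (p q : ℕ) (a b : A), a ∈ 𝒜 p → b ∈ 𝒜 q → Odd (p*q) → a*b = -(b*a) := by
    intro p q a b ha hb hod
    rw [hcomm p q a b ha hb, hod.neg_one_pow, neg_one_smul]
  -- even elements are central
  have hc : ∀ (p : ℕ) (u : A), u ∈ 𝒜 p → Even p → ∀ b : A, Commute u b := by
    intro p u hu hp b
    have hb : b ∈ Algebra.adjoin ℚ ({x₁, x₂, y₁, y₂, y₃, z, z'} : Set A) := by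
      rw [hgen]; trivial
    induction hb using Algebra.adjoin_induction with
    | mem g hg =>
      simp only [Set.mem_insert_iff, Set.mem_singleton_iff] at hg
      rcases hg with rfl | rfl | rfl | rfl | rfl | rfl | rfl
      · exact ecomm p 4 u g hu hx₁ (hp.mul_right 4)
      · exact ecomm p 6 u g hu hx₂ (hp.mul_right 6)
      · exact ecomm p 27 u g hu hy₁ (hp.mul_right 27)
      · exact ecomm p 29 u g hu hy₂ (hp.mul_right 29)
      · exact ecomm p 31 u g hu hy₃ (hp.mul_right 31)
      · exact ecomm p 77 u g hu hz (hp.mul_right 77)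
      · exact ecomm p (75 + 4*i) u g hu hz' (hp.mul_right _)
    | algebraMap r => exact (Algebra.commutes r u).symm
    | add x y hx hy ihx ihy => exact ihx.add_right ihy
    | mul x y hx hy ihx ihy => exact ihx.mul_right ihy
  have hc1 : ∀ b : A, Commute x₁ b := hc 4 x₁ hx₁ (by decide)
  have hc2 : ∀ b : A, Commute x₂ b := hc 6 x₂ hx₂ (by decide)
  -- x-monomials are central
  have hcX : ∀ (a b : ℕ) (t : A), Commute (x₁^a * x₂^b) t :=
    fun a b t => ((hc1 t).pow_left a).mul_left ((hc2 t).pow_left b)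
  have hyX : ∀ (a b : ℕ) (t : A), t * (x₁^a * x₂^b) = (x₁^a * x₂^b) * t :=
    fun a b t => ((hcX a b t).eq).symm
  -- multiplication of x-monomials
  have xmul : ∀ a b c e : ℕ, (x₁^a * x₂^b) * (x₁^c * x₂^e) = x₁^(a+c) * x₂^(b+e) := by
    intro a b c e
    have h : x₂^b * x₁^c = x₁^c * x₂^b := ((hc2 (x₁^c)).pow_left b).eq
    calc (x₁^a * x₂^b) * (x₁^c * x₂^e) = x₁^a * (x₂^b * (x₁^c * x₂^e)) := by
          rw [mul_assoc]
      _ = x₁^a * ((x₂^b * x₁^c) * x₂^e) := by rw [← mul_assoc (x₂^b)]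
      _ = x₁^a * (x₁^c * (x₂^b * x₂^e)) := by rw [h, mul_assoc]
      _ = (x₁^a * x₁^c) * (x₂^b * x₂^e) := by rw [← mul_assoc]
      _ = x₁^(a+c) * x₂^(b+e) := by rw [pow_add, pow_add]
  -- y anticommutation and squares
  have h21 : y₂ * y₁ = -(y₁ * y₂) := ocomm 29 27 y₂ y₁ hy₂ hy₁ (by decide)
  have h31 : y₃ * y₁ = -(y₁ * y₃) := ocomm 31 27 y₃ y₁ hy₃ hy₁ (by decide)
  have h32 : y₃ * y₂ = -(y₂ * y₃) := ocomm 31 29 y₃ y₂ hy₃ hy₂ (by decide)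
  have hsq1 : y₁ * y₁ = 0 := half _ (ocomm 27 27 y₁ y₁ hy₁ hy₁ (by decide))
  have hsq2 : y₂ * y₂ = 0 := half _ (ocomm 29 29 y₂ y₂ hy₂ hy₂ (by decide))
  have hsq3 : y₃ * y₃ = 0 := half _ (ocomm 31 31 y₃ y₃ hy₃ hy₃ (by decide))
  -- d of x-monomials
  have hd1 : d (1 : A) = 0 := by
    have h := hLeibniz 0 1 (SetLike.one_mem_graded 𝒜) 1
    simp only [one_mul, mul_one, pow_zero, one_smul] at h
    exact (left_eq_add.mp h)
  have hx1pow : ∀ n : ℕ, x₁^n ∈ 𝒜 (n*4) := by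
    intro n; simpa [smul_eq_mul] using SetLike.pow_mem_graded n hx₁
  have hx2pow : ∀ n : ℕ, x₂^n ∈ 𝒜 (n*6) := by
    intro n; simpa [smul_eq_mul] using SetLike.pow_mem_graded n hx₂
  have hdx1p : ∀ n : ℕ, d (x₁^n) = 0 := by
    intro n; induction n with
    | zero => simpa using hd1
    | succ n ih =>
      rw [pow_succ, hLeibniz (n*4) (x₁^n) (hx1pow n) x₁, ih, hdx₁]
      simp
  have hdx2p : ∀ n : ℕ, d (x₂^n) = 0 := by
    intro n; induction n with
    | zero => simpa using hd1
    | succ n ih =>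
      rw [pow_succ, hLeibniz (n*6) (x₂^n) (hx2pow n) x₂, ih, hdx₂]
      simp
  have hdX : ∀ a b : ℕ, d (x₁^a * x₂^b) = 0 := by
    intro a b
    rw [hLeibniz (a*4) _ (hx1pow a) _, hdx1p, hdx2p]
    simp
  have hX : ∀ a b : ℕ, x₁^a * x₂^b ∈ 𝒜 (a*4 + b*6) :=
    fun a b => SetLike.mul_mem_graded (hx1pow a) (hx2pow b)
  -- Leibniz specializations
  have dmon : ∀ (a b : ℕ) (t : A), d ((x₁^a * x₂^b) * t) = (x₁^a * x₂^b) * d t := by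
    intro a b t
    have he : Even (a*4 + b*6) := ⟨a*2 + b*3, by ring⟩
    rw [hLeibniz (a*4 + b*6) _ (hX a b) t, hdX, he.neg_one_pow, one_smul, zero_mul, zero_add]
  have dodd : ∀ (p : ℕ) (u : A), u ∈ 𝒜 p → Odd p → ∀ v : A,
      d (u*v) = d u * v - u * d v := by
    intro p u hu hp v
    rw [hLeibniz p u hu v, hp.neg_one_pow, neg_one_smul, ← sub_eq_add_neg]
  -- moving an x-monomial out of a product of two factors
  have key : ∀ (a b : ℕ) (c P Q : A), (c*P)*((x₁^a*x₂^b)*Q) = (c*(x₁^a*x₂^b))*(P*Q) := by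
    intro a b c P Q
    calc (c*P)*((x₁^a*x₂^b)*Q) = c*((P*(x₁^a*x₂^b))*Q) := by
          rw [mul_assoc, ← mul_assoc P]
      _ = c*((x₁^a*x₂^b)*(P*Q)) := by rw [hyX a b P, mul_assoc]
      _ = (c*(x₁^a*x₂^b))*(P*Q) := by rw [← mul_assoc]
  have key2 : ∀ (a b : ℕ) (c P : A), (c*P)*(x₁^a*x₂^b) = (c*(x₁^a*x₂^b))*P := by
    intro a b c P
    rw [mul_assoc, hyX a b P, ← mul_assoc]
  -- products of the odd quadratic monomials vanish
  have hP11 : (y₁*y₂)*(y₁*y₂) = 0 := by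
    have e : (y₁*y₂)*(y₁*y₂) = y₁*(y₂*y₁)*y₂ := by noncomm_ring
    rw [e, h21]
    have e2 : y₁*(-(y₁*y₂))*y₂ = -((y₁*y₁)*(y₂*y₂)) := by noncomm_ring
    rw [e2, hsq1, zero_mul, neg_zero]
  have hP12 : (y₁*y₂)*(y₁*y₃) = 0 := by
    have e : (y₁*y₂)*(y₁*y₃) = y₁*(y₂*y₁)*y₃ := by noncomm_ring
    rw [e, h21]
    have e2 : y₁*(-(y₁*y₂))*y₃ = -((y₁*y₁)*(y₂*y₃)) := by noncomm_ring
    rw [e2, hsq1, zero_mul, neg_zero]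
  have hP13 : (y₁*y₂)*(y₂*y₃) = 0 := by
    have e : (y₁*y₂)*(y₂*y₃) = y₁*(y₂*y₂)*y₃ := by noncomm_ring
    rw [e, hsq2, mul_zero, zero_mul]
  have hP21 : (y₁*y₃)*(y₁*y₂) = 0 := by
    have e : (y₁*y₃)*(y₁*y₂) = y₁*(y₃*y₁)*y₂ := by noncomm_ring
    rw [e, h31]
    have e2 : y₁*(-(y₁*y₃))*y₂ = -((y₁*y₁)*(y₃*y₂)) := by noncomm_ring
    rw [e2, hsq1, zero_mul, neg_zero]
  have hP22 : (y₁*y₃)*(y₁*y₃) = 0 := by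
    have e : (y₁*y₃)*(y₁*y₃) = y₁*(y₃*y₁)*y₃ := by noncomm_ring
    rw [e, h31]
    have e2 : y₁*(-(y₁*y₃))*y₃ = -((y₁*y₁)*(y₃*y₃)) := by noncomm_ring
    rw [e2, hsq1, zero_mul, neg_zero]
  have hP23 : (y₁*y₃)*(y₂*y₃) = 0 := by
    have e : (y₁*y₃)*(y₂*y₃) = y₁*(y₃*y₂)*y₃ := by noncomm_ring
    rw [e, h32]
    have e2 : y₁*(-(y₂*y₃))*y₃ = -((y₁*y₂)*(y₃*y₃)) := by noncomm_ring
    rw [e2, hsq3, mul_zero, neg_zero]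
  have hP31 : (y₂*y₃)*(y₁*y₂) = 0 := by
    have e : (y₂*y₃)*(y₁*y₂) = y₂*(y₃*y₁)*y₂ := by noncomm_ring
    rw [e, h31]
    have e2 : y₂*(-(y₁*y₃))*y₂ = -((y₂*y₁)*(y₃*y₂)) := by noncomm_ring
    rw [e2, h21, h32]
    have e3 : -(-(y₁*y₂)*(-(y₂*y₃))) = -(y₁*(y₂*y₂)*y₃) := by noncomm_ring
    rw [e3, hsq2, mul_zero, zero_mul, neg_zero]
  have hP32 : (y₂*y₃)*(y₁*y₃) = 0 := by
    have e : (y₂*y₃)*(y₁*y₃) = y₂*(y₃*y₁)*y₃ := by noncomm_ring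
    rw [e, h31]
    have e2 : y₂*(-(y₁*y₃))*y₃ = -((y₂*y₁)*(y₃*y₃)) := by noncomm_ring
    rw [e2, hsq3, mul_zero, neg_zero]
  have hP33 : (y₂*y₃)*(y₂*y₃) = 0 := by
    have e : (y₂*y₃)*(y₂*y₃) = y₂*(y₃*y₂)*y₃ := by noncomm_ring
    rw [e, h32]
    have e2 : y₂*(-(y₂*y₃))*y₃ = -((y₂*y₂)*(y₃*y₃)) := by noncomm_ring
    rw [e2, hsq2, zero_mul, neg_zero]
  -- the odd part Θ of dz and W = x₂ x₁¹⁸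
  set Θ : A := x₁^1*x₂^3*(y₁*y₂) - x₁^2*x₂^2*(y₁*y₃) + x₁^3*x₂^1*(y₂*y₃) with hΘdef
  set W : A := x₁^18*x₂^1 with hWdef
  have hdzΘ : d z = Θ + W + x₂^13 := by
    rw [hdz, hΘdef, hWdef]
    have e1 : x₂ * x₁^18 = x₁^18 * x₂^1 := by rw [pow_one]; exact (hc2 _).eq
    rw [e1]
    noncomm_ring
  -- memberships in degree 78
  have hS78 : d z ∈ 𝒜 78 := hdeg 77 z hz
  have hΘ78 : Θ ∈ 𝒜 78 := by
    rw [hΘdef]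
    have h1 : x₁^1*x₂^3*(y₁*y₂) ∈ 𝒜 78 :=
      SetLike.mul_mem_graded (hX 1 3) (SetLike.mul_mem_graded hy₁ hy₂)
    have h2 : x₁^2*x₂^2*(y₁*y₃) ∈ 𝒜 78 :=
      SetLike.mul_mem_graded (hX 2 2) (SetLike.mul_mem_graded hy₁ hy₃)
    have h3 : x₁^3*x₂^1*(y₂*y₃) ∈ 𝒜 78 :=
      SetLike.mul_mem_graded (hX 3 1) (SetLike.mul_mem_graded hy₂ hy₃)
    exact Submodule.add_mem _ (Submodule.sub_mem _ h1 h2) h3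
  have hW78 : W ∈ 𝒜 78 := by rw [hWdef]; exact hX 18 1
  -- commutation of the degree-78 pieces
  have hSΘ : Θ * d z = d z * Θ := ecomm 78 78 Θ (d z) hΘ78 hS78 (by decide)
  have hSW : W * d z = d z * W := ecomm 78 78 W (d z) hW78 hS78 (by decide)
  have hWΘ : W * Θ = Θ * W := ecomm 78 78 W Θ hW78 hΘ78 (by decide)
  -- differentials of the odd quadratic monomials
  have hdP1 : d (y₁*y₂) = x₁^4*x₂^2*y₂ - x₁^3*x₂^3*y₁ := by
    rw [dodd 27 y₁ hy₁ (by decide) y₂, hdy₁, hdy₂, hyX 3 3 y₁]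
  have hdP2 : d (y₁*y₃) = x₁^4*x₂^2*y₃ - x₁^2*x₂^4*y₁ := by
    rw [dodd 27 y₁ hy₁ (by decide) y₃, hdy₁, hdy₃, hyX 2 4 y₁]
  have hdP3 : d (y₂*y₃) = x₁^3*x₂^3*y₃ - x₁^2*x₂^4*y₂ := by
    rw [dodd 29 y₂ hy₂ (by decide) y₃, hdy₂, hdy₃, hyX 2 4 y₂]
  have hdΘ : d Θ = 0 := by
    rw [hΘdef, map_add, map_sub, dmon 1 3, dmon 2 2, dmon 3 1, hdP1, hdP2, hdP3,
      mul_sub, mul_sub, mul_sub,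
      ← mul_assoc (x₁^1*x₂^3) (x₁^4*x₂^2) y₂, ← mul_assoc (x₁^1*x₂^3) (x₁^3*x₂^3) y₁,
      ← mul_assoc (x₁^2*x₂^2) (x₁^4*x₂^2) y₃, ← mul_assoc (x₁^2*x₂^2) (x₁^2*x₂^4) y₁,
      ← mul_assoc (x₁^3*x₂^1) (x₁^3*x₂^3) y₃, ← mul_assoc (x₁^3*x₂^1) (x₁^2*x₂^4) y₂,
      xmul, xmul, xmul, xmul, xmul, xmul]
    norm_num
  have hdW : d W = 0 := by rw [hWdef]; exact hdX 18 1
  -- Θ² = 0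
  have hΘΘ : Θ * Θ = 0 := by
    rw [hΘdef]
    have e : (x₁^1*x₂^3*(y₁*y₂) - x₁^2*x₂^2*(y₁*y₃) + x₁^3*x₂^1*(y₂*y₃)) *
        (x₁^1*x₂^3*(y₁*y₂) - x₁^2*x₂^2*(y₁*y₃) + x₁^3*x₂^1*(y₂*y₃)) =
        (x₁^1*x₂^3*(y₁*y₂))*((x₁^1*x₂^3)*(y₁*y₂))
        - (x₁^1*x₂^3*(y₁*y₂))*((x₁^2*x₂^2)*(y₁*y₃))
        + (x₁^1*x₂^3*(y₁*y₂))*((x₁^3*x₂^1)*(y₂*y₃))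
        - (x₁^2*x₂^2*(y₁*y₃))*((x₁^1*x₂^3)*(y₁*y₂))
        + (x₁^2*x₂^2*(y₁*y₃))*((x₁^2*x₂^2)*(y₁*y₃))
        - (x₁^2*x₂^2*(y₁*y₃))*((x₁^3*x₂^1)*(y₂*y₃))
        + (x₁^3*x₂^1*(y₂*y₃))*((x₁^1*x₂^3)*(y₁*y₂))
        - (x₁^3*x₂^1*(y₂*y₃))*((x₁^2*x₂^2)*(y₁*y₃))
        + (x₁^3*x₂^1*(y₂*y₃))*((x₁^3*x₂^1)*(y₂*y₃)) := by noncomm_ring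
    rw [e, key, key, key, key, key, key, key, key, key,
      hP11, hP12, hP13, hP21, hP22, hP23, hP31, hP32, hP33]
    simp
  -- Θ·W in normal form
  have hΘWnf : Θ * W = x₁^19*x₂^4*(y₁*y₂) - x₁^20*x₂^3*(y₁*y₃) + x₁^21*x₂^2*(y₂*y₃) := by
    rw [hΘdef, hWdef, add_mul, sub_mul, key2 18 1 (x₁^1*x₂^3) (y₁*y₂), xmul,
      key2 18 1 (x₁^2*x₂^2) (y₁*y₃), xmul, key2 18 1 (x₁^3*x₂^1) (y₂*y₃), xmul]
  -- the primitives
  have hdzz : d (d z) = 0 := by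
    rw [hdzΘ, map_add, map_add, hdΘ, hdW, hdx2p 13]
    simp
  have hA1 : d (z * d z) = d z * d z := by
    rw [dodd 77 z hz (by decide) (d z), hdzz, mul_zero, sub_zero]
  have hA2 : d (z * Θ) = d z * Θ := by
    rw [dodd 77 z hz (by decide) Θ, hdΘ, mul_zero, sub_zero]
  have hA3 : d (z * W) = d z * W := by
    rw [dodd 77 z hz (by decide) W, hdW, mul_zero, sub_zero]
  have hdT : d (y₁*(y₂*y₃)) = x₁^4*x₂^2*(y₂*y₃) - x₁^3*x₂^3*(y₁*y₃) + x₁^2*x₂^4*(y₁*y₂) := by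
    rw [dodd 27 y₁ hy₁ (by decide) (y₂*y₃), hdP3, hdy₁, mul_sub,
      ← mul_assoc y₁ (x₁^3*x₂^3) y₃, hyX 3 3 y₁, ← mul_assoc y₁ (x₁^2*x₂^4) y₂, hyX 2 4 y₁,
      mul_assoc (x₁^3*x₂^3) y₁ y₃, mul_assoc (x₁^2*x₂^4) y₁ y₂]
    abel
  have hA4 : d ((x₁^17*x₂^0) * (y₁*(y₂*y₃))) = Θ * W := by
    rw [dmon 17 0, hdT, mul_add, mul_sub,
      ← mul_assoc (x₁^17*x₂^0) (x₁^4*x₂^2) (y₂*y₃),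
      ← mul_assoc (x₁^17*x₂^0) (x₁^3*x₂^3) (y₁*y₃),
      ← mul_assoc (x₁^17*x₂^0) (x₁^2*x₂^4) (y₁*y₂),
      xmul, xmul, xmul, hΘWnf]
    norm_num
    abel
  have hA5 : d ((x₁^32*x₂^0) * y₁) = W * W := by
    rw [dmon 32 0, hdy₁, xmul, hWdef, xmul]
  -- x₂²⁶ as a square
  have h13 : x₂^13 = d z - Θ - W := by rw [hdzΘ]; abel
  have h26 : x₂^26 = (d z - Θ - W) * (d z - Θ - W) := by
    rw [show (26:ℕ) = 13 + 13 from rfl, pow_add, h13]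
  have expand : (d z - Θ - W) * (d z - Θ - W) =
      d z * d z - d z * Θ - d z * W - Θ * d z + Θ * Θ + Θ * W
        - W * d z + W * Θ + W * W := by noncomm_ring
  refine ⟨z * d z - (2:ℚ) • (z * Θ) - (2:ℚ) • (z * W)
      + (2:ℚ) • ((x₁^17*x₂^0) * (y₁*(y₂*y₃))) + (x₁^32*x₂^0) * y₁, ?_⟩
  rw [map_add, map_add, map_sub, map_sub, map_smul, map_smul, map_smul,
    hA1, hA2, hA3, hA4, hA5, h26, expand, hΘΘ, hSΘ, hSW, hWΘ]
  simp only [two_smul]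
  abel
end

section
/- If rationals k₁, k₂, k₃, k₄ satisfy k₄ = k₁²k₂² + 3k₂²k₃, k₄ = k₂³, 2k₁²k₂k₃ + 3k₂k₃² = 0, and k₁²k₃² + k₃³ = 0, then either k₂ = 0, or k₁ = 0, or (k₃ = 0, k₂ = k₁², and k₄ = k₁⁶). -/
/-! If `k₃ ≠ 0`, the last two relations cancel to `2k₁² + 3k₃ = 0` and `k₁² + k₃ = 0`, which
force `k₁ = 0`. Once `k₃ = 0`, equating the two expressions for `k₄` gives `k₁²k₂² = k₂³`,
so `k₂ = k₁²` and `k₄ = k₂³ = k₁⁶`. -/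

section

variable {R : Type*} [CommRing R] [IsDomain R]

lemma eq_zero_of_cubic_relations {a b c : R} (ha : a ≠ 0) (hb : b ≠ 0)
    (h₃ : 2 * a ^ 2 * b * c + 3 * b * c ^ 2 = 0) (h₄ : a ^ 2 * c ^ 2 + c ^ 3 = 0) : c = 0 := by
  by_contra hc
  have hlin₃ : 2 * a ^ 2 + 3 * c = 0 := by
    have : b * c * (2 * a ^ 2 + 3 * c) = 0 := by linear_combination h₃
    simpa [hb, hc] using this
  have hlin₄ : a ^ 2 + c = 0 := by
    have : c ^ 2 * (a ^ 2 + c) = 0 := by linear_combination h₄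
    simpa [hc] using this
  exact pow_ne_zero 2 ha (by linear_combination 3 * hlin₄ - hlin₃)

lemma eq_sq_of_sq_mul_sq_eq_pow_three {a b : R} (hb : b ≠ 0) (h : a ^ 2 * b ^ 2 = b ^ 3) :
    b = a ^ 2 :=
  mul_left_cancel₀ (pow_ne_zero 2 hb) (by linear_combination -h)

end

/-- The coefficient relations forced on any endomorphism of the minimal Sullivan model of
the dimension `4k + 43` examples. -/
theorem coefficient_equations_prop3 (k₁ k₂ k₃ k₄ : ℚ)
    (h₁ : k₄ = k₁ ^ 2 * k₂ ^ 2 + 3 * k₂ ^ 2 * k₃)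
    (h₂ : k₄ = k₂ ^ 3)
    (h₃ : 2 * k₁ ^ 2 * k₂ * k₃ + 3 * k₂ * k₃ ^ 2 = 0)
    (h₄ : k₁ ^ 2 * k₃ ^ 2 + k₃ ^ 3 = 0) :
    k₂ = 0 ∨ k₁ = 0 ∨ (k₃ = 0 ∧ k₂ = k₁ ^ 2 ∧ k₄ = k₁ ^ 6) := by
  by_cases hk₂ : k₂ = 0
  · exact Or.inl hk₂
  by_cases hk₁ : k₁ = 0
  · exact Or.inr (Or.inl hk₁)
  have hk₃ : k₃ = 0 := eq_zero_of_cubic_relations hk₁ hk₂ h₃ h₄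
  have hk₂_eq : k₂ = k₁ ^ 2 :=
    eq_sq_of_sq_mul_sq_eq_pow_three hk₂ (by linear_combination h₂ - h₁ - 3 * k₂ ^ 2 * hk₃)
  exact Or.inr (Or.inr ⟨hk₃, hk₂_eq, by rw [h₂, hk₂_eq]; ring⟩)
end
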